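/- Any two orthogonal pure states |ψ⟩, |φ⟩ in ℂ² ⊗ ℂ^d admit orthonormal bases {|0'⟩,|1'⟩} of ℂ² and vectors η₀, η₁, ν₀, ν₁ ∈ ℂ^d with ⟨η_i|ν_i⟩ = 0 for i = 0,1, such that |ψ⟩ = |0'⟩|η₀⟩ + |1'⟩|η₁⟩ and |φ⟩ = |0'⟩|ν₀⟩ + |1'⟩|ν₁⟩ (Walgate et al. decomposition underlying local distinguishability of two orthogonal states). -/

import Mathlib

/-!
Write `ψ = ∑ₖ |k⟩ψₖ` and `φ = ∑ₖ |k⟩φₖ` with columns `ψₖ, φₖ ∈ ℂ^d`. For any orthonormal basis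
`{f₀, f₁}` of `ℂ²` the vectors `ηᵢ = ⟨fᵢ|ψ⟩`, `νᵢ = ⟨fᵢ|φ⟩` decompose `ψ` and `φ` as required, and
`⟨ηᵢ|νᵢ⟩ = ⟨fᵢ|T|fᵢ⟩` for `T = Tr₂ |φ⟩⟨ψ|`, whose trace is `⟨ψ|φ⟩ = 0`. So it suffices to find an
orthonormal basis in which a traceless operator on `ℂ²` has zero diagonal. In coordinates
`⟨u|T|u⟩` depends ℝ-linearly on `(|x|² - |y|², x̄y) ∈ ℝ × ℂ ≅ ℝ³` (the unnormalised Bloch vector of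
`u = (x, y)`), so two real equations in three real unknowns have a nonzero solution, and every
point of `ℝ × ℂ` is such a Bloch vector. Normalising gives a unit `f₀`; the trace forces the
diagonal entry at `f₁ ⊥ f₀` to vanish too.
-/

open scoped InnerProductSpace

/-- Product (tensor) vector `u ⊗ v` in `ℂ² ⊗ ℂ^d`, modeled as
`EuclideanSpace ℂ (Fin 2 × Fin d)`. -/
noncomputable def prodVec {d : ℕ} (u : EuclideanSpace ℂ (Fin 2))
    (v : EuclideanSpace ℂ (Fin d)) : EuclideanSpace ℂ (Fin 2 × Fin d) :=
  WithLp.toLp 2 (fun p : Fin 2 × Fin d => u p.1 * v p.2)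

open scoped ComplexConjugate

open InnerProductSpace

namespace Complex

theorem exists_normSq_sub_normSq_eq_and_conj_mul_eq (t : ℝ) (z : ℂ) :
    ∃ x y : ℂ, normSq x - normSq y = t ∧ conj x * y = z := by
  -- `N = |x|² + |y|²`, so that `|x|² = (N + t) / 2` and `|y|² = (N - t) / 2`
  set N := Real.sqrt (t ^ 2 + 4 * ‖z‖ ^ 2)
  have hN : N ^ 2 = t ^ 2 + 4 * ‖z‖ ^ 2 := Real.sq_sqrt (by positivity)
  have htN : |t| ≤ N := Real.abs_le_sqrt (by nlinarith [norm_nonneg z])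
  have hp : 0 ≤ (N + t) / 2 := by linarith [neg_abs_le t]
  have hm : 0 ≤ (N - t) / 2 := by linarith [le_abs_self t]
  refine ⟨Real.sqrt ((N + t) / 2), Real.sqrt ((N - t) / 2) * exp (arg z * I), ?_, ?_⟩
  · rw [normSq_mul, normSq_ofReal, normSq_ofReal, normSq_eq_norm_sq (exp _), norm_exp_ofReal_mul_I,
      Real.mul_self_sqrt hp, Real.mul_self_sqrt hm]
    ring
  · have : Real.sqrt ((N + t) / 2) * Real.sqrt ((N - t) / 2) = ‖z‖ := by
      rw [← Real.sqrt_mul hp, ← Real.sqrt_sq (norm_nonneg z)]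
      congr 1
      nlinarith
    rw [conj_ofReal, ← mul_assoc, ← ofReal_mul, this, norm_mul_exp_arg_mul_I]

theorem exists_ne_zero_traceless_form_eq_zero (a b c : ℂ) :
    ∃ x y : ℂ, (x ≠ 0 ∨ y ≠ 0) ∧
      conj x * x * a + conj x * y * b + conj y * x * c - conj y * y * a = 0 := by
  let L : ℝ × ℂ →ₗ[ℝ] ℂ :=
    { toFun := fun p => p.1 * a + p.2 * b + conj p.2 * c
      map_add' := fun p q => by simp only [Prod.fst_add, Prod.snd_add, ofReal_add, map_add]; ring
      map_smul' := fun r p => by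
        simp only [Prod.smul_fst, Prod.smul_snd, smul_eq_mul, real_smul, map_mul, conj_ofReal,
          RingHom.id_apply]
        push_cast
        ring }
  have hker : LinearMap.ker L ≠ ⊥ :=
    LinearMap.ker_ne_bot_of_finrank_lt (by simp [Module.finrank_prod])
  obtain ⟨⟨t, z⟩, htz, hne⟩ := (Submodule.ne_bot_iff _).1 hker
  obtain ⟨x, y, rfl, rfl⟩ := exists_normSq_sub_normSq_eq_and_conj_mul_eq t z
  refine ⟨x, y, ?_, ?_⟩
  · contrapose! hne
    simp [hne.1, hne.2]
  · have := LinearMap.mem_ker.1 htz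
    simp only [L, LinearMap.coe_mk, AddHom.coe_mk, ofReal_sub, normSq_eq_conj_mul_self, map_mul,
      conj_conj] at this
    linear_combination this

end Complex

namespace LinearMap

variable {E : Type*} [NormedAddCommGroup E] [InnerProductSpace ℂ E]

theorem exists_norm_eq_one_inner_apply_self_eq_zero (T : E →ₗ[ℂ] E)
    (hE : Module.finrank ℂ E = 2) (hT : T.trace ℂ E = 0) :
    ∃ u : E, ‖u‖ = 1 ∧ ⟪u, T u⟫_ℂ = 0 := by
  have : FiniteDimensional ℂ E := Module.finite_of_finrank_eq_succ hE
  let b := (stdOrthonormalBasis ℂ E).reindex (finCongr hE)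
  have hb : ∀ i j, ⟪b i, b j⟫_ℂ = if i = j then 1 else 0 := orthonormal_iff_ite.1 b.orthonormal
  have htr : ⟪b 0, T (b 0)⟫_ℂ + ⟪b 1, T (b 1)⟫_ℂ = 0 := by
    rwa [trace_eq_sum_inner T b, Fin.sum_univ_two] at hT
  obtain ⟨x, y, hxy, hq⟩ :=
    Complex.exists_ne_zero_traceless_form_eq_zero ⟪b 0, T (b 0)⟫_ℂ ⟪b 0, T (b 1)⟫_ℂ ⟪b 1, T (b 0)⟫_ℂ
  set v := x • b 0 + y • b 1
  have hv : v ≠ 0 := by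
    contrapose! hxy
    have h0 := congrArg (⟪b 0, ·⟫_ℂ) hxy
    have h1 := congrArg (⟪b 1, ·⟫_ℂ) hxy
    simp [v, hb] at h0 h1
    exact ⟨h0, h1⟩
  have hTv : ⟪v, T v⟫_ℂ = 0 := by
    simp only [v, map_add, map_smul, inner_add_left, inner_add_right, inner_smul_left,
      inner_smul_right]
    linear_combination hq + conj y * y * htr
  refine ⟨(‖v‖⁻¹ : ℂ) • v, norm_smul_inv_norm hv, ?_⟩
  rw [map_smul, inner_smul_left, inner_smul_right, hTv, mul_zero, mul_zero]

theorem exists_orthonormalBasis_inner_apply_self_eq_zero (T : E →ₗ[ℂ] E)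
    (hE : Module.finrank ℂ E = 2) (hT : T.trace ℂ E = 0) :
    ∃ b : OrthonormalBasis (Fin 2) ℂ E, ∀ i, ⟪b i, T (b i)⟫_ℂ = 0 := by
  obtain ⟨u, hu, hTu⟩ := exists_norm_eq_one_inner_apply_self_eq_zero T hE hT
  have : FiniteDimensional ℂ E := Module.finite_of_finrank_eq_succ hE
  have hs : Orthonormal ℂ (({0} : Set (Fin 2)).domRestrict fun _ => u) :=
    orthonormal_subsingleton_iff.2 fun _ => hu
  obtain ⟨b, hb⟩ := hs.exists_orthonormalBasis_extension_of_card_eq (by simpa using hE)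
  have hb0 : b 0 = u := hb 0 rfl
  have htr := trace_eq_sum_inner T b
  rw [hT, Fin.sum_univ_two, hb0, hTu, zero_add] at htr
  exact ⟨b, Fin.forall_fin_two.2 ⟨hb0 ▸ hTu, htr.symm⟩⟩

end LinearMap

section PartialInner

variable {ι κ : Type*} [Fintype ι] [Fintype κ]

def column (ψ : EuclideanSpace ℂ (ι × κ)) (j : κ) : EuclideanSpace ℂ ι :=
  WithLp.toLp 2 fun i => ψ (i, j)

noncomputable def partialInner (u : EuclideanSpace ℂ ι) (ψ : EuclideanSpace ℂ (ι × κ)) :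
    EuclideanSpace ℂ κ :=
  WithLp.toLp 2 fun j => ⟪u, column ψ j⟫_ℂ

-- the partial trace `Tr₂ |φ⟩⟨ψ|` over the second factor
noncomputable def partialTraceRankOne (φ ψ : EuclideanSpace ℂ (ι × κ)) :
    EuclideanSpace ℂ ι →L[ℂ] EuclideanSpace ℂ ι :=
  ∑ j, rankOne ℂ (column φ j) (column ψ j)

theorem inner_partialInner (u : EuclideanSpace ℂ ι) (ψ φ : EuclideanSpace ℂ (ι × κ)) :
    ⟪partialInner u ψ, partialInner u φ⟫_ℂ = ⟪u, partialTraceRankOne φ ψ u⟫_ℂ := by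
  rw [PiLp.inner_apply]
  simp only [partialInner, partialTraceRankOne, _root_.sum_apply, rankOne_apply, inner_sum,
    inner_smul_right]
  refine Finset.sum_congr rfl fun j _ => ?_
  rw [RCLike.inner_apply, inner_conj_symm, mul_comm]

theorem trace_partialTraceRankOne (φ ψ : EuclideanSpace ℂ (ι × κ)) :
    (partialTraceRankOne φ ψ : EuclideanSpace ℂ ι →ₗ[ℂ] _).trace ℂ _ = ⟪ψ, φ⟫_ℂ := by
  simp only [partialTraceRankOne, ContinuousLinearMap.toLinearMap_sum, map_sum, trace_rankOne,
    PiLp.inner_apply, column]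
  rw [Fintype.sum_prod_type_right]

theorem sum_prodVec_partialInner {d : ℕ}
    (f : OrthonormalBasis (Fin 2) ℂ (EuclideanSpace ℂ (Fin 2)))
    (ψ : EuclideanSpace ℂ (Fin 2 × Fin d)) :
    ∑ i, prodVec (f i) (partialInner (f i) ψ) = ψ := by
  ext ⟨k, j⟩
  have h := congrArg (· k) (f.sum_repr' (column ψ j))
  simp only [WithLp.ofLp_sum, WithLp.ofLp_smul, Finset.sum_apply, Pi.smul_apply, smul_eq_mul]
    at h
  simpa only [prodVec, partialInner, column, WithLp.ofLp_sum, Finset.sum_apply,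
    WithLp.ofLp_toLp, mul_comm] using h

end PartialInner

theorem walgate_decomposition_general (d : ℕ) (ψ φ : EuclideanSpace ℂ (Fin 2 × Fin d))
    (horth : ⟪ψ, φ⟫_ℂ = 0) :
    ∃ (f : Fin 2 → EuclideanSpace ℂ (Fin 2))
      (η ν : Fin 2 → EuclideanSpace ℂ (Fin d)),
      Orthonormal ℂ f ∧
      (∀ i, ⟪η i, ν i⟫_ℂ = 0) ∧
      ψ = prodVec (f 0) (η 0) + prodVec (f 1) (η 1) ∧
      φ = prodVec (f 0) (ν 0) + prodVec (f 1) (ν 1) := by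
  obtain ⟨f, hf⟩ := LinearMap.exists_orthonormalBasis_inner_apply_self_eq_zero
    (partialTraceRankOne φ ψ : EuclideanSpace ℂ (Fin 2) →ₗ[ℂ] _) finrank_euclideanSpace_fin
    (by rw [trace_partialTraceRankOne, horth])
  refine ⟨f, fun i => partialInner (f i) ψ, fun i => partialInner (f i) φ, f.orthonormal,
    fun i => (inner_partialInner _ _ _).trans (hf i), ?_, ?_⟩
  · simpa only [Fin.sum_univ_two] using (sum_prodVec_partialInner f ψ).symm
  · simpa only [Fin.sum_univ_two] using (sum_prodVec_partialInner f φ).symm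

/-- Walgate-type decomposition: any two orthogonal unit vectors `ψ, φ` in
`ℂ² ⊗ ℂ^d` can be written, in a suitable orthonormal basis `{|0'⟩,|1'⟩}` of
`ℂ²`, as `ψ = |0'⟩η₀ + |1'⟩η₁` and `φ = |0'⟩ν₀ + |1'⟩ν₁` with
`⟨η₀|ν₀⟩ = ⟨η₁|ν₁⟩ = 0`. -/
theorem walgate_decomposition (d : ℕ) (ψ φ : EuclideanSpace ℂ (Fin 2 × Fin d))
    (hψ : ‖ψ‖ = 1) (hφ : ‖φ‖ = 1) (horth : ⟪ψ, φ⟫_ℂ = 0) :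
    ∃ (f : Fin 2 → EuclideanSpace ℂ (Fin 2))
      (η ν : Fin 2 → EuclideanSpace ℂ (Fin d)),
      Orthonormal ℂ f ∧
      (∀ i, ⟪η i, ν i⟫_ℂ = 0) ∧
      ψ = prodVec (f 0) (η 0) + prodVec (f 1) (η 1) ∧
      φ = prodVec (f 0) (ν 0) + prodVec (f 1) (ν 1) :=
  walgate_decomposition_general d ψ φ horth
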